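/- Suppose the constrained bilevel problem attains its optimal value, i.e., there exist x* ∈ X and y* ∈ Y with g̃(x*,y*) ≤ 0 componentwise, f̃(x*,y*) = f̃*(x*), and f(x*,y*) = f*. Then for all ρ, μ > 0: (i) f_low ≤ inf_{(x,y)∈X×Y} sup_{z∈Y} P_{ρ,μ}(x,y,z) ≤ f* + ρ( f̃_hi − f̃_low ); and (ii) inf{ P_{ρ,μ}(x,y,z) : (x,y,z) ∈ X × Y × Y } ≥ f_low + ρ( f̃_low − f̃_hi ) − ρμ g̃_hi². -/

import Mathlib

noncomputable section

open Set

open scoped RealInnerProductSpace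

/-- Euclidean space `ℝⁿ`. -/
abbrev En (n : ℕ) := EuclideanSpace ℝ (Fin n)

/-- Componentwise positive part `[v]₊` of a vector `v ∈ ℝˡ`. -/
def posPart {l : ℕ} (v : En l) : En l := WithLp.toLp 2 (fun i => max (v i) 0)

/-- The Euclidean distance `‖(x,y) − (x',y')‖` on `ℝⁿ × ℝᵐ`. -/
def prodDist {n m : ℕ} (p q : En n × En m) : ℝ :=
  Real.sqrt (‖p.1 - q.1‖ ^ 2 + ‖p.2 - q.2‖ ^ 2)

/-- `φ` is `L`-Lipschitz on `X × Y` (with the Euclidean norm on `ℝⁿ × ℝᵐ`). -/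
def LipOnXY {n m : ℕ} (φ : En n × En m → ℝ) (L : ℝ)
    (X : Set (En n)) (Y : Set (En m)) : Prop :=
  ∀ p ∈ X ×ˢ Y, ∀ q ∈ X ×ˢ Y, |φ p - φ q| ≤ L * prodDist p q

/-- The Slater condition with constant `G`. -/
def Slater {n m l : ℕ} (gt : En n × En m → En l) (X : Set (En n)) (Y : Set (En m))
    (G : ℝ) : Prop :=
  ∀ x ∈ X, ∃ zhat ∈ Y, ∀ i, gt (x, zhat) i ≤ -G

/-- The lower-level value function `f̃*(x) = inf { f̃(x,z) : z ∈ Y, g̃(x,z) ≤ 0 }`. -/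
def ftStar {n m l : ℕ} (ft : En n × En m → ℝ) (gt : En n × En m → En l)
    (Y : Set (En m)) (x : En n) : ℝ :=
  sInf {v | ∃ z ∈ Y, (∀ i, gt (x, z) i ≤ 0) ∧ v = ft (x, z)}

/-- `f̃*_hi = sup_{x ∈ X} f̃*(x)`. -/
def ftStarHi {n m l : ℕ} (ft : En n × En m → ℝ) (gt : En n × En m → En l)
    (X : Set (En n)) (Y : Set (En m)) : ℝ :=
  sSup {v | ∃ x ∈ X, v = ftStar ft gt Y x}

/-- `f̃_low = inf { f̃(x,y) : (x,y) ∈ X × Y }`. -/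
def ftLow {n m : ℕ} (ft : En n × En m → ℝ) (X : Set (En n)) (Y : Set (En m)) : ℝ :=
  sInf {v | ∃ x ∈ X, ∃ y ∈ Y, v = ft (x, y)}

/-- `f̃_hi = sup { f̃(x,y) : (x,y) ∈ X × Y }`. -/
def ftHi {n m : ℕ} (ft : En n × En m → ℝ) (X : Set (En n)) (Y : Set (En m)) : ℝ :=
  sSup {v | ∃ x ∈ X, ∃ y ∈ Y, v = ft (x, y)}

/-- `f_low = inf { f(x,y) : (x,y) ∈ X × Y }`. -/
def fLow {n m : ℕ} (f : En n × En m → ℝ) (X : Set (En n)) (Y : Set (En m)) : ℝ :=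
  sInf {v | ∃ x ∈ X, ∃ y ∈ Y, v = f (x, y)}

/-- `g̃_hi = sup { ‖g̃(x,y)‖ : (x,y) ∈ X × Y }`. -/
def gtHi {n m l : ℕ} (gt : En n × En m → En l) (X : Set (En n)) (Y : Set (En m)) : ℝ :=
  sSup {v | ∃ x ∈ X, ∃ y ∈ Y, v = ‖gt (x, y)‖}

/-- The lower-level penalty function `P̃_μ(x,z) = f̃(x,z) + μ ‖[g̃(x,z)]₊‖²`. -/
def Ptilde {n m l : ℕ} (ft : En n × En m → ℝ) (gt : En n × En m → En l)
    (μ : ℝ) (x : En n) (z : En m) : ℝ :=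
  ft (x, z) + μ * ‖posPart (gt (x, z))‖ ^ 2

/-- `inf_{z ∈ Y} P̃_μ(x,z)`. -/
def PtildeMinVal {n m l : ℕ} (ft : En n × En m → ℝ) (gt : En n × En m → En l)
    (Y : Set (En m)) (μ : ℝ) (x : En n) : ℝ :=
  sInf {w | ∃ z ∈ Y, w = Ptilde ft gt μ x z}

/-- The minimax penalty function `P_{ρ,μ}(x,y,z) = f(x,y) + ρ (P̃_μ(x,y) − P̃_μ(x,z))`. -/
def Prhomu {n m l : ℕ} (f ft : En n × En m → ℝ) (gt : En n × En m → En l)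
    (ρ μ : ℝ) (x : En n) (y z : En m) : ℝ :=
  f (x, y) + ρ * (Ptilde ft gt μ x y - Ptilde ft gt μ x z)

/-- `sup_{z ∈ Y} P_{ρ,μ}(x,y,z)`. -/
def maxPc {n m l : ℕ} (f ft : En n × En m → ℝ) (gt : En n × En m → En l)
    (Y : Set (En m)) (ρ μ : ℝ) (x : En n) (y : En m) : ℝ :=
  sSup {v | ∃ z ∈ Y, v = Prhomu f ft gt ρ μ x y z}

/-- `inf_{(x,y)∈X×Y} sup_{z∈Y} P_{ρ,μ}(x,y,z)`. -/
def minimaxValc {n m l : ℕ} (f ft : En n × En m → ℝ) (gt : En n × En m → En l)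
    (X : Set (En n)) (Y : Set (En m)) (ρ μ : ℝ) : ℝ :=
  sInf {v | ∃ x ∈ X, ∃ y ∈ Y, v = maxPc f ft gt Y ρ μ x y}

/-- `(x,y,z)` is an ε-optimal solution of `min_{(x,y)∈X×Y} max_{z∈Y} P_{ρ,μ}(x,y,z)`. -/
def epsOptimalc {n m l : ℕ} (f ft : En n × En m → ℝ) (gt : En n × En m → En l)
    (X : Set (En n)) (Y : Set (En m)) (ρ μ ε : ℝ) (x : En n) (y z : En m) : Prop :=
  maxPc f ft gt Y ρ μ x y - Prhomu f ft gt ρ μ x y z ≤ ε ∧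
  Prhomu f ft gt ρ μ x y z - minimaxValc f ft gt X Y ρ μ ≤ ε

/-- The constrained bilevel optimal value
`f* = inf { f(x,y) : x ∈ X, y ∈ Y, g̃(x,y) ≤ 0, f̃(x,y) = f̃*(x) }`. -/
def fStarC {n m l : ℕ} (f ft : En n × En m → ℝ) (gt : En n × En m → En l)
    (X : Set (En n)) (Y : Set (En m)) : ℝ :=
  sInf {v | ∃ x ∈ X, ∃ y ∈ Y,
    (∀ i, gt (x, y) i ≤ 0) ∧ ft (x, y) = ftStar ft gt Y x ∧ v = f (x, y)}

/-- The penalized bilevel optimal value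
`f*_μ = inf { f(x,y) : x ∈ X, y ∈ Y, P̃_μ(x,y) = inf_{z∈Y} P̃_μ(x,z) }`. -/
def fStarMu {n m l : ℕ} (f ft : En n × En m → ℝ) (gt : En n × En m → En l)
    (X : Set (En n)) (Y : Set (En m)) (μ : ℝ) : ℝ :=
  sInf {v | ∃ x ∈ X, ∃ y ∈ Y, Ptilde ft gt μ x y = PtildeMinVal ft gt Y μ x ∧ v = f (x, y)}

/-- The set `S_θ(x)` of θ-approximately feasible lower-level minimizers. -/
def Sθ {n m l : ℕ} (ft : En n × En m → ℝ) (gt : En n × En m → En l)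
    (Y : Set (En m)) (θ : ℝ) (x : En n) : Set (En m) :=
  {z | z ∈ Y ∧ ‖posPart (gt (x, z))‖ ≤ θ ∧
    ft (x, z) = sInf {w | ∃ z' ∈ Y, ‖posPart (gt (x, z'))‖ ≤ θ ∧ w = ft (x, z')}}

/-- The error-bound assumption with constants `θbar` and function `ω`. -/
def ErrorBound {n m l : ℕ} (ft : En n × En m → ℝ) (gt : En n × En m → En l)
    (X : Set (En n)) (Y : Set (En m)) (θbar : ℝ) (ω : ℝ → ℝ) : Prop :=
  0 < θbar ∧ (∀ t, 0 ≤ t → 0 ≤ ω t) ∧ (∀ a b, 0 ≤ a → a ≤ b → ω a ≤ ω b) ∧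
    Filter.Tendsto ω (nhdsWithin 0 (Set.Ioi 0)) (nhds 0) ∧
    ∀ x ∈ X, ∀ z ∈ Sθ ft gt Y 0 x, ∀ θ ∈ Set.Icc 0 θbar,
      Metric.infDist z (Sθ ft gt Y θ x) ≤ ω θ

/-! The diagonal `z = y` gives `sup_z P_{ρ,μ}(x,y,z) ≥ f(x,y)`; at a feasible point the penalty
vanishes, so `P̃_μ(x*,y*) = f̃(x*,y*)`; and `‖[g̃]₊‖ ≤ ‖g̃‖` bounds the penalty from above.
Everything else is the boundedness of `f`, `f̃` and `g̃` on the compact set `X × Y`. -/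

section SetOfProd

variable {α β : Type*} {X : Set α} {Y : Set β} {φ : α × β → ℝ} {x : α} {y : β}

lemma setOf_prod_subset_image :
    {v | ∃ x ∈ X, ∃ y ∈ Y, v = φ (x, y)} ⊆ φ '' X ×ˢ Y := by
  rintro _ ⟨x, hx, y, hy, rfl⟩
  exact ⟨(x, y), ⟨hx, hy⟩, rfl⟩

lemma csInf_setOf_prod_le (h : BddBelow (φ '' X ×ˢ Y)) (hx : x ∈ X) (hy : y ∈ Y) :
    sInf {v | ∃ x ∈ X, ∃ y ∈ Y, v = φ (x, y)} ≤ φ (x, y) :=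
  csInf_le (h.mono setOf_prod_subset_image) ⟨x, hx, y, hy, rfl⟩

lemma le_csSup_setOf_prod (h : BddAbove (φ '' X ×ˢ Y)) (hx : x ∈ X) (hy : y ∈ Y) :
    φ (x, y) ≤ sSup {v | ∃ x ∈ X, ∃ y ∈ Y, v = φ (x, y)} :=
  le_csSup (h.mono setOf_prod_subset_image) ⟨x, hx, y, hy, rfl⟩

end SetOfProd

lemma posPart_eq_zero_of_forall_nonpos {l : ℕ} {v : En l} (hv : ∀ i, v i ≤ 0) : posPart v = 0 := by
  ext i
  exact max_eq_right (hv i)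

lemma norm_posPart_le {l : ℕ} (v : En l) : ‖posPart v‖ ≤ ‖v‖ := by
  rw [EuclideanSpace.norm_eq, EuclideanSpace.norm_eq]
  gcongr with i
  change ‖max (v i) 0‖ ≤ ‖v i‖
  rcases le_total (v i) 0 with h | h
  · simp [max_eq_right h]
  · rw [max_eq_left h]

section Penalty

variable {n m l : ℕ} {Y : Set (En m)} {f ft : En n × En m → ℝ}
  {gt : En n × En m → En l} {ρ μ : ℝ} {x : En n} {y z : En m}

lemma Ptilde_eq_of_feasible (h : ∀ i, gt (x, z) i ≤ 0) : Ptilde ft gt μ x z = ft (x, z) := by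
  simp [Ptilde, posPart_eq_zero_of_forall_nonpos h]

lemma le_Ptilde (hμ : 0 ≤ μ) : ft (x, z) ≤ Ptilde ft gt μ x z :=
  le_add_of_nonneg_right (by positivity)

lemma Ptilde_le (hμ : 0 ≤ μ) : Ptilde ft gt μ x z ≤ ft (x, z) + μ * ‖gt (x, z)‖ ^ 2 := by
  unfold Ptilde
  gcongr
  exact norm_posPart_le _

lemma Prhomu_self : Prhomu f ft gt ρ μ x y y = f (x, y) := by
  simp [Prhomu]

lemma Prhomu_le (hρ : 0 ≤ ρ) (hμ : 0 ≤ μ) {c : ℝ} (hc : c ≤ ft (x, z)) :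
    Prhomu f ft gt ρ μ x y z ≤ f (x, y) + ρ * (Ptilde ft gt μ x y - c) := by
  unfold Prhomu
  gcongr
  exact hc.trans (le_Ptilde hμ)

lemma maxPc_le (hρ : 0 ≤ ρ) (hμ : 0 ≤ μ) (hY : Y.Nonempty) {c : ℝ}
    (hc : ∀ z ∈ Y, c ≤ ft (x, z)) :
    maxPc f ft gt Y ρ μ x y ≤ f (x, y) + ρ * (Ptilde ft gt μ x y - c) := by
  obtain ⟨z₀, hz₀⟩ := hY
  refine csSup_le ⟨_, z₀, hz₀, rfl⟩ ?_
  rintro _ ⟨z, hz, rfl⟩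
  exact Prhomu_le hρ hμ (hc z hz)

lemma le_maxPc (hρ : 0 ≤ ρ) (hμ : 0 ≤ μ) (hy : y ∈ Y) {c : ℝ} (hc : ∀ z ∈ Y, c ≤ ft (x, z)) :
    f (x, y) ≤ maxPc f ft gt Y ρ μ x y := by
  refine le_csSup ⟨f (x, y) + ρ * (Ptilde ft gt μ x y - c), ?_⟩ ⟨y, hy, Prhomu_self.symm⟩
  rintro _ ⟨z, hz, rfl⟩
  exact Prhomu_le hρ hμ (hc z hz)

end Penalty

section Compact

variable {n m l : ℕ} {X : Set (En n)} {Y : Set (En m)} {f ft : En n × En m → ℝ}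
  {gt : En n × En m → En l} {ρ μ : ℝ} {x : En n} {y : En m}

lemma fLow_le (hK : IsCompact (X ×ˢ Y)) (hf : ContinuousOn f (X ×ˢ Y)) (hx : x ∈ X)
    (hy : y ∈ Y) : fLow f X Y ≤ f (x, y) :=
  csInf_setOf_prod_le (hK.image_of_continuousOn hf).bddBelow hx hy

lemma ftLow_le (hK : IsCompact (X ×ˢ Y)) (hft : ContinuousOn ft (X ×ˢ Y)) (hx : x ∈ X)
    (hy : y ∈ Y) : ftLow ft X Y ≤ ft (x, y) :=
  csInf_setOf_prod_le (hK.image_of_continuousOn hft).bddBelow hx hy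

lemma le_ftHi (hK : IsCompact (X ×ˢ Y)) (hft : ContinuousOn ft (X ×ˢ Y)) (hx : x ∈ X)
    (hy : y ∈ Y) : ft (x, y) ≤ ftHi ft X Y :=
  le_csSup_setOf_prod (hK.image_of_continuousOn hft).bddAbove hx hy

lemma norm_le_gtHi (hK : IsCompact (X ×ˢ Y)) (hgt : ContinuousOn gt (X ×ˢ Y)) (hx : x ∈ X)
    (hy : y ∈ Y) : ‖gt (x, y)‖ ≤ gtHi gt X Y :=
  le_csSup_setOf_prod (φ := fun p => ‖gt p‖) (hK.image_of_continuousOn hgt.norm).bddAbove hx hy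

lemma fLow_le_maxPc (hK : IsCompact (X ×ˢ Y)) (hf : ContinuousOn f (X ×ˢ Y))
    (hft : ContinuousOn ft (X ×ˢ Y)) (hρ : 0 ≤ ρ) (hμ : 0 ≤ μ) (hx : x ∈ X) (hy : y ∈ Y) :
    fLow f X Y ≤ maxPc f ft gt Y ρ μ x y :=
  (fLow_le hK hf hx hy).trans (le_maxPc hρ hμ hy fun _ hz => ftLow_le hK hft hx hz)

lemma fLow_le_minimaxValc (hK : IsCompact (X ×ˢ Y)) (hf : ContinuousOn f (X ×ˢ Y))
    (hft : ContinuousOn ft (X ×ˢ Y)) (hρ : 0 ≤ ρ) (hμ : 0 ≤ μ) (hX : X.Nonempty)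
    (hY : Y.Nonempty) : fLow f X Y ≤ minimaxValc f ft gt X Y ρ μ := by
  obtain ⟨x₀, hx₀⟩ := hX
  obtain ⟨y₀, hy₀⟩ := hY
  refine le_csInf ⟨_, x₀, hx₀, y₀, hy₀, rfl⟩ ?_
  rintro _ ⟨x, hx, y, hy, rfl⟩
  exact fLow_le_maxPc hK hf hft hρ hμ hx hy

lemma minimaxValc_le (hK : IsCompact (X ×ˢ Y)) (hf : ContinuousOn f (X ×ˢ Y))
    (hft : ContinuousOn ft (X ×ˢ Y)) (hρ : 0 ≤ ρ) (hμ : 0 ≤ μ) (hx : x ∈ X) (hy : y ∈ Y)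
    (hfeas : ∀ i, gt (x, y) i ≤ 0) :
    minimaxValc f ft gt X Y ρ μ ≤ f (x, y) + ρ * (ftHi ft X Y - ftLow ft X Y) := by
  have hbdd : BddBelow {v | ∃ x ∈ X, ∃ y ∈ Y, v = maxPc f ft gt Y ρ μ x y} := by
    refine ⟨fLow f X Y, ?_⟩
    rintro _ ⟨x, hx, y, hy, rfl⟩
    exact fLow_le_maxPc hK hf hft hρ hμ hx hy
  calc minimaxValc f ft gt X Y ρ μ ≤ maxPc f ft gt Y ρ μ x y :=
        csInf_le hbdd ⟨x, hx, y, hy, rfl⟩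
    _ ≤ f (x, y) + ρ * (Ptilde ft gt μ x y - ftLow ft X Y) :=
        maxPc_le hρ hμ ⟨y, hy⟩ fun _ hz => ftLow_le hK hft hx hz
    _ ≤ f (x, y) + ρ * (ftHi ft X Y - ftLow ft X Y) := by
        rw [Ptilde_eq_of_feasible hfeas]
        gcongr
        exact le_ftHi hK hft hx hy

lemma le_csInf_Prhomu (hK : IsCompact (X ×ˢ Y)) (hf : ContinuousOn f (X ×ˢ Y))
    (hft : ContinuousOn ft (X ×ˢ Y)) (hgt : ContinuousOn gt (X ×ˢ Y)) (hρ : 0 ≤ ρ)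
    (hμ : 0 ≤ μ) (hX : X.Nonempty) (hY : Y.Nonempty) :
    fLow f X Y + ρ * (ftLow ft X Y - ftHi ft X Y) - ρ * μ * gtHi gt X Y ^ 2 ≤
      sInf {v | ∃ x ∈ X, ∃ y ∈ Y, ∃ z ∈ Y, v = Prhomu f ft gt ρ μ x y z} := by
  obtain ⟨x₀, hx₀⟩ := hX
  obtain ⟨y₀, hy₀⟩ := hY
  refine le_csInf ⟨_, x₀, hx₀, y₀, hy₀, y₀, hy₀, rfl⟩ ?_
  rintro _ ⟨x, hx, y, hy, z, hz, rfl⟩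
  have hPz : Ptilde ft gt μ x z ≤ ftHi ft X Y + μ * gtHi gt X Y ^ 2 := by
    refine (Ptilde_le hμ).trans ?_
    gcongr
    exacts [le_ftHi hK hft hx hz, norm_le_gtHi hK hgt hx hz]
  calc fLow f X Y + ρ * (ftLow ft X Y - ftHi ft X Y) - ρ * μ * gtHi gt X Y ^ 2
      = fLow f X Y + ρ * (ftLow ft X Y - (ftHi ft X Y + μ * gtHi gt X Y ^ 2)) := by ring
    _ ≤ f (x, y) + ρ * (Ptilde ft gt μ x y - Ptilde ft gt μ x z) := by
        gcongr
        exacts [fLow_le hK hf hx hy, (ftLow_le hK hft hx hy).trans (le_Ptilde hμ)]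

end Compact

theorem stmt17_general {n m l : ℕ}
    (X : Set (En n)) (Y : Set (En m))
    (hXne : X.Nonempty) (hXcpt : IsCompact X)
    (hYne : Y.Nonempty) (hYcpt : IsCompact Y)
    (f ft : En n × En m → ℝ) (gt : En n × En m → En l)
    (hfc : ContinuousOn f (X ×ˢ Y)) (hftc : ContinuousOn ft (X ×ˢ Y))
    (hgtc : ContinuousOn gt (X ×ˢ Y))
    -- the constrained bilevel problem attains its optimal value
    (xstar : En n) (ystar : En m) (hxstar : xstar ∈ X) (hystar : ystar ∈ Y)
    (hfeasstar : ∀ i, gt (xstar, ystar) i ≤ 0)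
    (hopt2 : f (xstar, ystar) = fStarC f ft gt X Y) :
    ∀ ρ > (0 : ℝ), ∀ μ > (0 : ℝ),
      (fLow f X Y ≤ minimaxValc f ft gt X Y ρ μ ∧
        minimaxValc f ft gt X Y ρ μ ≤
          fStarC f ft gt X Y + ρ * (ftHi ft X Y - ftLow ft X Y)) ∧
      fLow f X Y + ρ * (ftLow ft X Y - ftHi ft X Y) - ρ * μ * gtHi gt X Y ^ 2 ≤
        sInf {v | ∃ x ∈ X, ∃ y ∈ Y, ∃ z ∈ Y, v = Prhomu f ft gt ρ μ x y z} := by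
  intro ρ hρ μ hμ
  have hK : IsCompact (X ×ˢ Y) := hXcpt.prod hYcpt
  refine ⟨⟨fLow_le_minimaxValc hK hfc hftc hρ.le hμ.le hXne hYne, ?_⟩,
    le_csInf_Prhomu hK hfc hftc hgtc hρ.le hμ.le hXne hYne⟩
  rw [← hopt2]
  exact minimaxValc_le hK hfc hftc hρ.le hμ.le hxstar hystar hfeasstar

theorem stmt17 {n m l : ℕ} (hn : 0 < n) (hm : 0 < m) (hl : 0 < l)
    (X : Set (En n)) (Y : Set (En m))
    (hXne : X.Nonempty) (hXcpt : IsCompact X)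
    (hYne : Y.Nonempty) (hYcpt : IsCompact Y) (hYconv : Convex ℝ Y)
    (f ft : En n × En m → ℝ) (gt : En n × En m → En l)
    (hfc : ContinuousOn f (X ×ˢ Y)) (hftc : ContinuousOn ft (X ×ˢ Y))
    (hgtc : ContinuousOn gt (X ×ˢ Y))
    (hftconv : ∀ x ∈ X, ConvexOn ℝ Y fun z => ft (x, z))
    (hgtconv : ∀ x ∈ X, ∀ i, ConvexOn ℝ Y fun z => gt (x, z) i)
    (hfeas : ∀ x ∈ X, ∃ z ∈ Y, ∀ i, gt (x, z) i ≤ 0)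
    -- the constrained bilevel problem attains its optimal value
    (xstar : En n) (ystar : En m) (hxstar : xstar ∈ X) (hystar : ystar ∈ Y)
    (hfeasstar : ∀ i, gt (xstar, ystar) i ≤ 0)
    (hopt1 : ft (xstar, ystar) = ftStar ft gt Y xstar)
    (hopt2 : f (xstar, ystar) = fStarC f ft gt X Y) :
    ∀ ρ > (0 : ℝ), ∀ μ > (0 : ℝ),
      (fLow f X Y ≤ minimaxValc f ft gt X Y ρ μ ∧
        minimaxValc f ft gt X Y ρ μ ≤
          fStarC f ft gt X Y + ρ * (ftHi ft X Y - ftLow ft X Y)) ∧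
      fLow f X Y + ρ * (ftLow ft X Y - ftHi ft X Y) - ρ * μ * gtHi gt X Y ^ 2 ≤
        sInf {v | ∃ x ∈ X, ∃ y ∈ Y, ∃ z ∈ Y, v = Prhomu f ft gt ρ μ x y z} :=
  stmt17_general X Y hXne hXcpt hYne hYcpt f ft gt hfc hftc hgtc xstar ystar hxstar hystar hfeasstar
    hopt2
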